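/- arXiv:2303.09649 — 3 statements merged into one kernel-verified Lean document; each statement's English description precedes it below -/
import Mathlib

section
/- Let h : ℝ → ℝ be C⁴ on [a,b]. Then sup_{t ∈ [a,b]} |h''(t)| ≤ (1/2)((b-a)/2)² · sup_{[a,b]} |h⁗| + ((b-a)/2) · max(|h'''(a)|, |h'''(b)|) + max(|h''(a)|, |h''(b)|). -/
open Set

/-- Forward order-1 Taylor bound with explicit derivative hypotheses. -/
lemma taylor1_forward {a b : ℝ} {f f' f'' : ℝ → ℝ} {C : ℝ}
    (hf : ∀ x ∈ Set.Icc a b, HasDerivWithinAt f (f' x) (Set.Icc a b) x)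
    (hf' : ∀ x ∈ Set.Icc a b, HasDerivWithinAt f' (f'' x) (Set.Icc a b) x)
    (hC : ∀ x ∈ Set.Icc a b, |f'' x| ≤ C) :
    ∀ x ∈ Set.Icc a b, |f x - f a - f' a * (x - a)| ≤ C * (x - a) ^ 2 / 2 := by
  intro x hx
  have hab : a ≤ b := le_trans hx.1 hx.2
  have ha : a ∈ Set.Icc a b := ⟨le_refl a, hab⟩
  have hlip : ∀ y ∈ Set.Icc a b, |f' y - f' a| ≤ C * (y - a) := by
    intro y hy
    have := (convex_Icc a b).norm_image_sub_le_of_norm_hasDerivWithin_le hf'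
      (fun z hz => by simpa using hC z hz) ha hy
    rw [Real.norm_eq_abs, Real.norm_eq_abs,
      abs_of_nonneg (by linarith [hy.1] : (0:ℝ) ≤ y - a)] at this
    exact this
  set F := fun y : ℝ => f y - f a - f' a * (y - a) with hF
  have hFd : ∀ y ∈ Set.Icc a b, HasDerivWithinAt F (f' y - f' a) (Set.Icc a b) y := by
    intro y hy
    have h1 : HasDerivWithinAt (fun y : ℝ => f' a * (y - a)) (f' a * 1) (Set.Icc a b) y :=
      (((hasDerivWithinAt_id y (Set.Icc a b)).sub_const a)).const_mul (f' a)
    have h2 := ((hf y hy).sub_const (f a)).sub h1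
    rw [show f' y - f' a = f' y - f' a * 1 by ring]; exact h2
  have key : ∀ y ∈ Set.Icc a b, ‖F y‖ ≤ C * (y - a) ^ 2 / 2 := by
    intro y hy
    refine image_norm_le_of_norm_deriv_right_le_deriv_boundary
      (f' := fun y => f' y - f' a) (B := fun y => C * (y - a) ^ 2 / 2)
      (B' := fun y => C * (y - a)) ?_ ?_ ?_ ?_ ?_ hy
    · exact fun z hz => (hFd z hz).continuousWithinAt
    · intro z hz
      exact (hFd z (Ico_subset_Icc_self hz)).mono_of_mem_nhdsWithin (Icc_mem_nhdsGE_of_mem hz)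
    · simp [F]
    · intro z
      have : HasDerivAt (fun y : ℝ => C * (y - a) ^ 2 / 2)
          (C * (2 * (z - a) ^ 1 * 1) / 2) z := by
        exact (((((hasDerivAt_id z).sub_const a)).pow 2).const_mul C).div_const 2
      convert this using 1
      ring
    · intro z hz
      rw [Real.norm_eq_abs]
      exact hlip z (Ico_subset_Icc_self hz)
  simpa [F, Real.norm_eq_abs] using key x hx

/-- Backward order-1 Taylor bound, by reflection. -/
lemma taylor1_backward {a b : ℝ} {f f' f'' : ℝ → ℝ} {C : ℝ}
    (hf : ∀ x ∈ Set.Icc a b, HasDerivWithinAt f (f' x) (Set.Icc a b) x)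
    (hf' : ∀ x ∈ Set.Icc a b, HasDerivWithinAt f' (f'' x) (Set.Icc a b) x)
    (hC : ∀ x ∈ Set.Icc a b, |f'' x| ≤ C) :
    ∀ x ∈ Set.Icc a b, |f x - f b - f' b * (x - b)| ≤ C * (b - x) ^ 2 / 2 := by
  intro x hx
  set r := fun y : ℝ => a + b - y with hr
  have hmaps : Set.MapsTo r (Set.Icc a b) (Set.Icc a b) := by
    intro y hy
    exact ⟨by simp [r]; linarith [hy.2], by simp [r]; linarith [hy.1]⟩
  have hrd : ∀ y : ℝ, HasDerivWithinAt r (-1) (Set.Icc a b) y := by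
    intro y
    simpa using ((hasDerivAt_id y).const_sub (a + b)).hasDerivWithinAt
  have hg : ∀ y ∈ Set.Icc a b,
      HasDerivWithinAt (f ∘ r) (-(f' (r y))) (Set.Icc a b) y := by
    intro y hy
    have := (hf (r y) (hmaps hy)).comp y (hrd y) hmaps
    simpa using this
  have hg' : ∀ y ∈ Set.Icc a b,
      HasDerivWithinAt (fun y => -(f' (r y))) (f'' (r y)) (Set.Icc a b) y := by
    intro y hy
    have := ((hf' (r y) (hmaps hy)).comp y (hrd y) hmaps).neg
    rw [show f'' (r y) = -(f'' (r y) * -1) by ring]; exact this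
  have hC' : ∀ y ∈ Set.Icc a b, |f'' (r y)| ≤ C := fun y hy => hC (r y) (hmaps hy)
  have hx' : a + b - x ∈ Set.Icc a b := hmaps hx
  have key := taylor1_forward (f := f ∘ r) (f' := fun y => -(f' (r y)))
    (f'' := fun y => f'' (r y)) hg hg' hC' (a + b - x) hx'
  have e1 : (f ∘ r) (a + b - x) = f x := by simp [r, Function.comp]
  have e2 : (f ∘ r) a = f b := by simp [r, Function.comp]
  have e3 : r a = b := by simp [r]
  rw [e1, e2] at key
  have : |f x - f b - f' b * (x - b)| ≤ C * (a + b - x - a) ^ 2 / 2 := by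
    have e4 : f x - f b - -f' (r a) * (a + b - x - a) = f x - f b - f' b * (x - b) := by
      rw [e3]; ring
    rwa [e4] at key
  convert this using 2
  ring

/-- Midpoint bound on the second derivative:
`sup_{[a,b]} |h''| ≤ (1/2)((b-a)/2)² sup|h⁗| + ((b-a)/2) max endpoint |h'''| + max endpoint |h''|`. -/
theorem stmt_2 (a b : ℝ) (hab : a ≤ b) (h : ℝ → ℝ)
    (hh : ContDiffOn ℝ 4 h (Set.Icc a b))
    (M : ℝ)
    (hM : ∀ t ∈ Set.Icc a b, |iteratedDerivWithin 4 h (Set.Icc a b) t| ≤ M) :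
    ∀ t ∈ Set.Icc a b,
      |iteratedDerivWithin 2 h (Set.Icc a b) t| ≤
        (1 / 2) * ((b - a) / 2) ^ 2 * M
        + ((b - a) / 2) * max |iteratedDerivWithin 3 h (Set.Icc a b) a|
                              |iteratedDerivWithin 3 h (Set.Icc a b) b|
        + max |iteratedDerivWithin 2 h (Set.Icc a b) a|
              |iteratedDerivWithin 2 h (Set.Icc a b) b| := by
  intro t ht
  rcases eq_or_lt_of_le hab with rfl | hlt
  · have : t = a := le_antisymm ht.2 ht.1
    subst this
    have hM0 : 0 ≤ M := le_trans (abs_nonneg _) (hM t ht)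
    simp only [sub_self]
    nlinarith [abs_nonneg (iteratedDerivWithin 3 h (Set.Icc t t) t),
      le_max_left |iteratedDerivWithin 2 h (Set.Icc t t) t| |iteratedDerivWithin 2 h (Set.Icc t t) t|]
  set s := Set.Icc a b with hs
  have hu : UniqueDiffOn ℝ s := uniqueDiffOn_Icc hlt
  set g2 := iteratedDerivWithin 2 h s with hg2
  set g3 := iteratedDerivWithin 3 h s with hg3
  set g4 := iteratedDerivWithin 4 h s with hg4
  have hg2d : ∀ x ∈ s, HasDerivWithinAt g2 (g3 x) s x := by
    intro x hxs
    have hdiff : DifferentiableOn ℝ g2 s :=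
      hh.differentiableOn_iteratedDerivWithin (by norm_num) hu
    have := (hdiff x hxs).hasDerivWithinAt
    have e : derivWithin g2 s x = g3 x := by
      rw [hg3, iteratedDerivWithin_succ]
    rwa [e] at this
  have hg3d : ∀ x ∈ s, HasDerivWithinAt g3 (g4 x) s x := by
    intro x hxs
    have hdiff : DifferentiableOn ℝ g3 s :=
      hh.differentiableOn_iteratedDerivWithin (by norm_num) hu
    have := (hdiff x hxs).hasDerivWithinAt
    have e : derivWithin g3 s x = g4 x := by
      rw [hg4, iteratedDerivWithin_succ]
    rwa [e] at this
  have ha : a ∈ s := ⟨le_refl a, hab⟩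
  have hb : b ∈ s := ⟨hab, le_refl b⟩
  have hM0 : 0 ≤ M := le_trans (abs_nonneg _) (hM a ha)
  have hmax3a : |g3 a| ≤ max |g3 a| |g3 b| := le_max_left _ _
  have hmax3b : |g3 b| ≤ max |g3 a| |g3 b| := le_max_right _ _
  have hmax2a : |g2 a| ≤ max |g2 a| |g2 b| := le_max_left _ _
  have hmax2b : |g2 b| ≤ max |g2 a| |g2 b| := le_max_right _ _
  have hmax30 : 0 ≤ max |g3 a| |g3 b| := le_trans (abs_nonneg _) hmax3a
  rcases le_total t ((a + b) / 2) with hmid | hmid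
  · -- expand from a
    have key := taylor1_forward hg2d hg3d hM t ht
    have h1 : |g2 t| ≤ |g2 t - g2 a - g3 a * (t - a)| + |g2 a| + |g3 a| * (t - a) := by
      have := abs_add_le (g2 t - g2 a - g3 a * (t - a)) (g2 a + g3 a * (t - a))
      have habs : |g2 a + g3 a * (t - a)| ≤ |g2 a| + |g3 a| * (t - a) := by
        refine le_trans (abs_add_le _ _) ?_
        rw [abs_mul, abs_of_nonneg (by linarith [ht.1] : (0:ℝ) ≤ t - a)]
      calc |g2 t| = |g2 t - g2 a - g3 a * (t - a) + (g2 a + g3 a * (t - a))| := by ring_nf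
        _ ≤ |g2 t - g2 a - g3 a * (t - a)| + |g2 a + g3 a * (t - a)| := abs_add_le _ _
        _ ≤ _ := by linarith
    have hta : t - a ≤ (b - a) / 2 := by linarith
    have hta0 : (0:ℝ) ≤ t - a := by linarith [ht.1]
    have hsq : (t - a) ^ 2 ≤ ((b - a) / 2) ^ 2 := by nlinarith
    have h3 : |g3 a| * (t - a) ≤ max |g3 a| |g3 b| * ((b - a) / 2) := by
      apply mul_le_mul hmax3a hta hta0 hmax30
    nlinarith [abs_nonneg (g3 a)]
  · -- expand from b
    have key := taylor1_backward hg2d hg3d hM t ht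
    have hbt : b - t ≤ (b - a) / 2 := by linarith
    have hbt0 : (0:ℝ) ≤ b - t := by linarith [ht.2]
    have h1 : |g2 t| ≤ |g2 t - g2 b - g3 b * (t - b)| + |g2 b| + |g3 b| * (b - t) := by
      have habs : |g2 b + g3 b * (t - b)| ≤ |g2 b| + |g3 b| * (b - t) := by
        refine le_trans (abs_add_le _ _) ?_
        rw [abs_mul]
        have : |t - b| = b - t := by rw [abs_sub_comm, abs_of_nonneg hbt0]
        rw [this]
      calc |g2 t| = |g2 t - g2 b - g3 b * (t - b) + (g2 b + g3 b * (t - b))| := by ring_nf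
        _ ≤ |g2 t - g2 b - g3 b * (t - b)| + |g2 b + g3 b * (t - b)| := abs_add_le _ _
        _ ≤ _ := by linarith
    have hsq : (b - t) ^ 2 ≤ ((b - a) / 2) ^ 2 := by nlinarith
    have h3 : |g3 b| * (b - t) ≤ max |g3 a| |g3 b| * ((b - a) / 2) := by
      apply mul_le_mul hmax3b hbt hbt0 hmax30
    nlinarith [abs_nonneg (g3 b)]
end

section
/- Let h : ℝ → ℝ be C⁴ on [a,b] and let p be the linear interpolant of h at a and b. Then sup_{t ∈ [a,b]} |h(t) - p(t)| ≤ (1/4)·sup_{[a,b]}|h⁗|·((b-a)/2)⁴ + (1/2)·((b-a)/2)³·max(|h'''(a)|,|h'''(b)|) + (1/2)·((b-a)/2)²·max(|h''(a)|,|h''(b)|). -/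
open Set

/-- Tight first-order Taylor bound, valid in both directions. -/
lemma taylor1_bound {lo hi : ℝ} {f f' f'' : ℝ → ℝ} {C : ℝ}
    (hf : ∀ y ∈ Icc lo hi, HasDerivWithinAt f (f' y) (Icc lo hi) y)
    (hf' : ∀ y ∈ Icc lo hi, HasDerivWithinAt f' (f'' y) (Icc lo hi) y)
    (hC : ∀ y ∈ Icc lo hi, |f'' y| ≤ C)
    {x₀ x : ℝ} (hx₀ : x₀ ∈ Icc lo hi) (hx : x ∈ Icc lo hi) :
    |f x - f x₀ - (x - x₀) * f' x₀| ≤ C / 2 * (x - x₀) ^ 2 := by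
  have hfc : ContinuousOn f (Icc lo hi) := fun y hy => (hf y hy).continuousWithinAt
  have hf'c : ContinuousOn f' (Icc lo hi) := fun y hy => (hf' y hy).continuousWithinAt
  rcases le_total x₀ x with hle | hle
  · -- expansion point left of evaluation point
    have hsub : Icc x₀ x ⊆ Icc lo hi := Icc_subset_Icc hx₀.1 hx.2
    have lip : ∀ y ∈ Icc lo hi, |f' y - f' x₀| ≤ C * |y - x₀| := fun y hy =>
      Convex.norm_image_sub_le_of_norm_hasDerivWithin_le hf'
        (fun z hz => by simpa using hC z hz) (convex_Icc lo hi) hx₀ hy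
    have hφc : ContinuousOn (fun y => f y - f x₀ - (y - x₀) * f' x₀) (Icc x₀ x) :=
      ((hfc.mono hsub).sub continuousOn_const).sub (Continuous.continuousOn (by fun_prop))
    have hφ' : ∀ y ∈ Ico x₀ x, HasDerivWithinAt (fun y => f y - f x₀ - (y - x₀) * f' x₀)
        (f' y - f' x₀) (Ici y) y := by
      intro y hy
      have hyI : y ∈ Icc lo hi := ⟨hx₀.1.trans hy.1, hy.2.le.trans hx.2⟩
      have A : HasDerivWithinAt (fun y => f y - f x₀ - (y - x₀) * f' x₀)
          (f' y - f' x₀) (Icc lo hi) y := by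
        have := ((hf y hyI).sub_const (f x₀)).sub
          (((hasDerivWithinAt_id y (Icc lo hi)).sub_const x₀).mul_const (f' x₀))
        exact this.congr_deriv (by ring)
      exact A.mono_of_mem_nhdsWithin
        (Icc_mem_nhdsGE_of_mem ⟨hyI.1, lt_of_lt_of_le hy.2 hx.2⟩)
    have hB : ∀ y : ℝ, HasDerivAt (fun y => C / 2 * (y - x₀) ^ 2) (C * (y - x₀)) y := by
      intro y
      have := (((hasDerivAt_id y).sub_const x₀).pow 2).const_mul (C / 2)
      exact this.congr_deriv (by simp only [id]; ring)
    have bound : ∀ y ∈ Ico x₀ x, ‖f' y - f' x₀‖ ≤ C * (y - x₀) := by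
      intro y hy
      have hyI : y ∈ Icc lo hi := ⟨hx₀.1.trans hy.1, hy.2.le.trans hx.2⟩
      rw [Real.norm_eq_abs]
      have := lip y hyI
      rwa [abs_of_nonneg (sub_nonneg.2 hy.1)] at this
    have main := image_norm_le_of_norm_deriv_right_le_deriv_boundary hφc hφ'
      (by simp) hB bound (right_mem_Icc.2 hle)
    simpa [Real.norm_eq_abs] using main
  · -- expansion point right of evaluation point
    have hsub : Icc x x₀ ⊆ Icc lo hi := Icc_subset_Icc hx.1 hx₀.2
    have hφc : ContinuousOn (fun y => f x - f y - (x - y) * f' y) (Icc x x₀) :=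
      (continuousOn_const.sub (hfc.mono hsub)).sub
        (((continuous_const.sub continuous_id).continuousOn).mul (hf'c.mono hsub))
    have hφ' : ∀ y ∈ Ico x x₀, HasDerivWithinAt (fun y => f x - f y - (x - y) * f' y)
        ((y - x) * f'' y) (Ici y) y := by
      intro y hy
      have hyI : y ∈ Icc lo hi := ⟨hx.1.trans hy.1, hy.2.le.trans hx₀.2⟩
      have A : HasDerivWithinAt (fun y => f x - f y - (x - y) * f' y)
          ((y - x) * f'' y) (Icc lo hi) y := by
        have := ((hasDerivWithinAt_const y (Icc lo hi) (f x)).sub (hf y hyI)).sub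
          (((hasDerivWithinAt_const y (Icc lo hi) x).sub
            (hasDerivWithinAt_id y (Icc lo hi))).mul (hf' y hyI))
        exact this.congr_deriv (by simp only [Pi.sub_apply, id]; ring)
      exact A.mono_of_mem_nhdsWithin
        (Icc_mem_nhdsGE_of_mem ⟨hyI.1, lt_of_lt_of_le hy.2 hx₀.2⟩)
    have hB : ∀ y : ℝ, HasDerivAt (fun y => C / 2 * (y - x) ^ 2) (C * (y - x)) y := by
      intro y
      have := (((hasDerivAt_id y).sub_const x).pow 2).const_mul (C / 2)
      exact this.congr_deriv (by simp only [id]; ring)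
    have bound : ∀ y ∈ Ico x x₀, ‖(y - x) * f'' y‖ ≤ C * (y - x) := by
      intro y hy
      have hyI : y ∈ Icc lo hi := ⟨hx.1.trans hy.1, hy.2.le.trans hx₀.2⟩
      have h1 := hC y hyI
      have h2 : (0:ℝ) ≤ y - x := sub_nonneg.2 hy.1
      rw [Real.norm_eq_abs, abs_mul, abs_of_nonneg h2]
      nlinarith [abs_nonneg (f'' y)]
    have main := image_norm_le_of_norm_deriv_right_le_deriv_boundary hφc hφ'
      (by simp) hB bound (right_mem_Icc.2 hle)
    have : |f x - f x₀ - (x - x₀) * f' x₀| ≤ C / 2 * (x₀ - x) ^ 2 := by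
      simpa [Real.norm_eq_abs] using main
    calc |f x - f x₀ - (x - x₀) * f' x₀| ≤ C / 2 * (x₀ - x) ^ 2 := this
      _ = C / 2 * (x - x₀) ^ 2 := by ring

/-- Zeroth order mapping comparable bound: linear interpolation error of a C⁴ function in
terms of its fourth derivative and endpoint second/third derivatives. -/
theorem stmt_3 (a b : ℝ) (hab : a < b) (h : ℝ → ℝ)
    (hh : ContDiffOn ℝ 4 h (Set.Icc a b))
    (p : ℝ → ℝ)
    (hp : ∀ t, p t = h a + (t - a) / (b - a) * (h b - h a))
    (M : ℝ)
    (hM : ∀ t ∈ Set.Icc a b, |iteratedDerivWithin 4 h (Set.Icc a b) t| ≤ M) :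
    ∀ t ∈ Set.Icc a b,
      |h t - p t| ≤
        (1 / 4) * M * ((b - a) / 2) ^ 4
        + (1 / 2) * ((b - a) / 2) ^ 3 *
            max |iteratedDerivWithin 3 h (Set.Icc a b) a|
                |iteratedDerivWithin 3 h (Set.Icc a b) b|
        + (1 / 2) * ((b - a) / 2) ^ 2 *
            max |iteratedDerivWithin 2 h (Set.Icc a b) a|
                |iteratedDerivWithin 2 h (Set.Icc a b) b| := by
  intro t ht
  have ud : UniqueDiffOn ℝ (Set.Icc a b) := uniqueDiffOn_Icc hab
  have ha_mem : a ∈ Set.Icc a b := left_mem_Icc.2 hab.le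
  have hb_mem : b ∈ Set.Icc a b := right_mem_Icc.2 hab.le
  have hder : ∀ n : ℕ, n < 4 → ∀ y ∈ Set.Icc a b,
      HasDerivWithinAt (iteratedDerivWithin n h (Set.Icc a b))
        (iteratedDerivWithin (n + 1) h (Set.Icc a b) y) (Set.Icc a b) y := by
    intro n hn y hy
    have hdiff : DifferentiableOn ℝ (iteratedDerivWithin n h (Set.Icc a b)) (Set.Icc a b) :=
      hh.differentiableOn_iteratedDerivWithin (by exact_mod_cast hn) ud
    have := (hdiff y hy).hasDerivWithinAt
    rwa [← iteratedDerivWithin_succ] at this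
  have H0 : ∀ y ∈ Set.Icc a b,
      HasDerivWithinAt h (iteratedDerivWithin 1 h (Set.Icc a b) y) (Set.Icc a b) y := by
    intro y hy
    exact (hder 0 (by norm_num) y hy).congr
      (fun z _ => by simp [iteratedDerivWithin_zero]) (by simp [iteratedDerivWithin_zero])
  set d : ℝ := (b - a) / 2 with hd
  set K2 : ℝ := max |iteratedDerivWithin 2 h (Set.Icc a b) a|
      |iteratedDerivWithin 2 h (Set.Icc a b) b| with hK2
  set K3 : ℝ := max |iteratedDerivWithin 3 h (Set.Icc a b) a|
      |iteratedDerivWithin 3 h (Set.Icc a b) b| with hK3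
  set K : ℝ := M / 2 * d ^ 2 + d * K3 + K2 with hK
  have hd0 : (0:ℝ) ≤ d := by rw [hd]; linarith
  have hM0 : (0:ℝ) ≤ M := le_trans (abs_nonneg _) (hM a ha_mem)
  -- Step A: bound the second derivative everywhere on [a,b]
  have stepA : ∀ u ∈ Set.Icc a b, |iteratedDerivWithin 2 h (Set.Icc a b) u| ≤ K := by
    intro u hu
    have key : ∀ c ∈ Set.Icc a b, |u - c| ≤ d →
        |iteratedDerivWithin 2 h (Set.Icc a b) u| ≤
          M / 2 * d ^ 2 + d * |iteratedDerivWithin 3 h (Set.Icc a b) c|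
            + |iteratedDerivWithin 2 h (Set.Icc a b) c| := by
      intro c hc hdist
      have tb := taylor1_bound (hder 2 (by norm_num)) (hder 3 (by norm_num)) hM hc hu
      norm_num at tb
      have habs : |iteratedDerivWithin 2 h (Set.Icc a b) u| ≤
          |iteratedDerivWithin 2 h (Set.Icc a b) u - iteratedDerivWithin 2 h (Set.Icc a b) c
            - (u - c) * iteratedDerivWithin 3 h (Set.Icc a b) c|
          + |u - c| * |iteratedDerivWithin 3 h (Set.Icc a b) c|
          + |iteratedDerivWithin 2 h (Set.Icc a b) c| := by
        have e : |iteratedDerivWithin 2 h (Set.Icc a b) u| =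
            |(iteratedDerivWithin 2 h (Set.Icc a b) u - iteratedDerivWithin 2 h (Set.Icc a b) c
              - (u - c) * iteratedDerivWithin 3 h (Set.Icc a b) c)
            + ((u - c) * iteratedDerivWithin 3 h (Set.Icc a b) c
              + iteratedDerivWithin 2 h (Set.Icc a b) c)| := congrArg abs (by ring)
        have e2 := abs_add_le (iteratedDerivWithin 2 h (Set.Icc a b) u
            - iteratedDerivWithin 2 h (Set.Icc a b) c
            - (u - c) * iteratedDerivWithin 3 h (Set.Icc a b) c)
          ((u - c) * iteratedDerivWithin 3 h (Set.Icc a b) c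
            + iteratedDerivWithin 2 h (Set.Icc a b) c)
        have e3 := abs_add_le ((u - c) * iteratedDerivWithin 3 h (Set.Icc a b) c)
          (iteratedDerivWithin 2 h (Set.Icc a b) c)
        rw [abs_mul] at e3
        linarith [e.le]
      have h1 : (u - c) ^ 2 ≤ d ^ 2 := by
        have := pow_le_pow_left₀ (abs_nonneg (u - c)) hdist 2
        rwa [sq_abs] at this
      have h2 : |u - c| * |iteratedDerivWithin 3 h (Set.Icc a b) c| ≤
          d * |iteratedDerivWithin 3 h (Set.Icc a b) c| :=
        mul_le_mul_of_nonneg_right hdist (abs_nonneg _)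
      nlinarith
    rcases le_total u ((a + b) / 2) with hu2 | hu2
    · have h1 : |u - a| ≤ d := by
        rw [abs_of_nonneg (by linarith [hu.1]), hd]; linarith
      have := key a ha_mem h1
      have h2 : |iteratedDerivWithin 3 h (Set.Icc a b) a| ≤ K3 := le_max_left _ _
      have h3 : |iteratedDerivWithin 2 h (Set.Icc a b) a| ≤ K2 := le_max_left _ _
      have h4 : d * |iteratedDerivWithin 3 h (Set.Icc a b) a| ≤ d * K3 :=
        mul_le_mul_of_nonneg_left h2 hd0
      rw [hK]; linarith
    · have h1 : |u - b| ≤ d := by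
        rw [abs_of_nonpos (by linarith [hu.2]), hd]; linarith
      have := key b hb_mem h1
      have h2 : |iteratedDerivWithin 3 h (Set.Icc a b) b| ≤ K3 := le_max_right _ _
      have h3 : |iteratedDerivWithin 2 h (Set.Icc a b) b| ≤ K2 := le_max_right _ _
      have h4 : d * |iteratedDerivWithin 3 h (Set.Icc a b) b| ≤ d * K3 :=
        mul_le_mul_of_nonneg_left h2 hd0
      rw [hK]; linarith
  have hK0 : (0:ℝ) ≤ K := le_trans (abs_nonneg _) (stepA a ha_mem)
  -- Step B: expand h at t toward both endpoints
  have tba := taylor1_bound H0 (hder 1 (by norm_num)) stepA ht ha_mem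
  have tbb := taylor1_bound H0 (hder 1 (by norm_num)) stepA ht hb_mem
  set Ra : ℝ := h a - h t - (a - t) * iteratedDerivWithin 1 h (Set.Icc a b) t with hRa
  set Rb : ℝ := h b - h t - (b - t) * iteratedDerivWithin 1 h (Set.Icc a b) t with hRb
  set l : ℝ := (t - a) / (b - a) with hl
  have hba : b - a ≠ 0 := sub_ne_zero.2 hab.ne'
  have hl0 : (0:ℝ) ≤ l := div_nonneg (by linarith [ht.1]) (by linarith)
  have hl1 : l ≤ 1 := (div_le_one (by linarith)).2 (by linarith [ht.2])
  have hta : t - a = l * (b - a) := by rw [hl, div_mul_cancel₀ _ hba]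
  have htb : b - t = (1 - l) * (b - a) := by rw [hl]; field_simp; ring
  have key : h t - p t = -((1 - l) * Ra + l * Rb) := by
    rw [hp t, hRa, hRb, hl]
    field_simp
    ring
  calc |h t - p t| = |(1 - l) * Ra + l * Rb| := by rw [key, abs_neg]
    _ ≤ (1 - l) * |Ra| + l * |Rb| := by
        refine (abs_add_le _ _).trans ?_
        rw [abs_mul, abs_mul, abs_of_nonneg (by linarith : (0:ℝ) ≤ 1 - l),
          abs_of_nonneg hl0]
    _ ≤ (1 - l) * (K / 2 * (a - t) ^ 2) + l * (K / 2 * (b - t) ^ 2) :=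
        add_le_add (mul_le_mul_of_nonneg_left tba (by linarith))
          (mul_le_mul_of_nonneg_left tbb hl0)
    _ ≤ K / 2 * d ^ 2 := by
        have e1 : a - t = -(l * (b - a)) := by rw [← hta]; ring
        rw [e1, htb, hd]
        have expand : (1 - l) * (K / 2 * (-(l * (b - a))) ^ 2)
            + l * (K / 2 * ((1 - l) * (b - a)) ^ 2)
            = K / 2 * ((b - a) / 2) ^ 2 - K * ((b - a) * (1 - 2 * l)) ^ 2 / 8 := by ring
        have hnn : 0 ≤ K * ((b - a) * (1 - 2 * l)) ^ 2 :=
          mul_nonneg hK0 (sq_nonneg _)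
        rw [expand]
        exact sub_le_self _ (div_nonneg hnn (by norm_num))
    _ = (1 / 4) * M * d ^ 4 + (1 / 2) * d ^ 3 * K3 + (1 / 2) * d ^ 2 * K2 := by
        rw [hK]; ring
end

section
/- Let φ : ℝ³ → ℝ³ be a C¹ diffeomorphism and c : [t₀, t₁] → ℝ³ a line segment c(t) = c₀ + ((t - t₀)/(t₁ - t₀))·(c₁ - c₀) with ‖c₁ - c₀‖ = t₁ - t₀. Let f = φ ∘ c and let g(t) = φ(c₀) + ((t - t₀)/(t₁ - t₀))·(φ(c₁) - φ(c₀)). Define ε₀ = c₀ - φ(c₀) and ε₁ = c₁ - φ(c₁). Then sup_{t ∈ [t₀,t₁]} ‖f(t) - g(t)‖ ≤ (1/2)·( sup_{t ∈ [t₀,t₁]} ‖Dφ(c(t)) - I‖ · (t₁ - t₀) + ‖ε₁ - ε₀‖ ). -/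
/-- Zeroth order mapping error bound for a single segment: if `φ` is a C¹ diffeomorphism of ℝ³,
`c` the arc-length segment from `c₀` to `c₁` over `[t₀,t₁]`, `f = φ ∘ c` and `g` the linear
interpolation of the mapped endpoints, then with `ε₀ = c₀ - φ c₀`, `ε₁ = c₁ - φ c₁`,
`‖f t - g t‖ ≤ (1/2)(K (t₁ - t₀) + ‖ε₁ - ε₀‖)` for `K` bounding `‖Dφ(c t) - I‖` on `[t₀,t₁]`. -/
theorem stmt_9 (t₀ t₁ : ℝ) (ht : t₀ < t₁)
    (φ : EuclideanSpace ℝ (Fin 3) → EuclideanSpace ℝ (Fin 3))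
    (hφ : ContDiff ℝ 1 φ)
    (ψ : EuclideanSpace ℝ (Fin 3) → EuclideanSpace ℝ (Fin 3))
    (hψ : ContDiff ℝ 1 ψ)
    (hinv₁ : Function.LeftInverse ψ φ) (hinv₂ : Function.RightInverse ψ φ)
    (c₀ c₁ : EuclideanSpace ℝ (Fin 3))
    (harc : ‖c₁ - c₀‖ = t₁ - t₀)
    (c f g : ℝ → EuclideanSpace ℝ (Fin 3))
    (hc : ∀ t, c t = c₀ + ((t - t₀) / (t₁ - t₀)) • (c₁ - c₀))
    (hf : ∀ t, f t = φ (c t))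
    (hg : ∀ t, g t = φ c₀ + ((t - t₀) / (t₁ - t₀)) • (φ c₁ - φ c₀))
    (ε₀ ε₁ : EuclideanSpace ℝ (Fin 3))
    (hε₀ : ε₀ = c₀ - φ c₀) (hε₁ : ε₁ = c₁ - φ c₁)
    (K : ℝ)
    (hK : ∀ t ∈ Set.Icc t₀ t₁,
      ‖fderiv ℝ φ (c t) - ContinuousLinearMap.id ℝ (EuclideanSpace ℝ (Fin 3))‖ ≤ K) :
    ∀ t ∈ Set.Icc t₀ t₁,
      ‖f t - g t‖ ≤ (1 / 2) * (K * (t₁ - t₀) + ‖ε₁ - ε₀‖) := by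
  intro t htmem
  obtain ⟨ht0, ht1⟩ := htmem
  have hLpos : (0:ℝ) < t₁ - t₀ := by linarith
  set s : ℝ := (t - t₀) / (t₁ - t₀) with hs
  have hs0 : 0 ≤ s := div_nonneg (by linarith) hLpos.le
  have hs1 : s ≤ 1 := by rw [hs, div_le_one hLpos]; linarith
  have hK0 : 0 ≤ K := le_trans (norm_nonneg _) (hK t₀ ⟨le_rfl, ht.le⟩)
  set h : EuclideanSpace ℝ (Fin 3) → EuclideanSpace ℝ (Fin 3) := fun x => φ x - x with hh
  have hdiff : Differentiable ℝ h := (hφ.differentiable one_ne_zero).sub differentiable_id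
  have hfd : ∀ x, fderiv ℝ h x
      = fderiv ℝ φ x - ContinuousLinearMap.id ℝ (EuclideanSpace ℝ (Fin 3)) := by
    intro x
    rw [hh]
    exact (fderiv_sub ((hφ.differentiable one_ne_zero) x) differentiableAt_id).trans
      (by rw [fderiv_id])
  have hseg : ∀ x ∈ segment ℝ c₀ c₁, ‖fderiv ℝ h x‖ ≤ K := by
    intro x hx
    obtain ⟨a, b, ha, hb, hab, hx⟩ := hx
    have hb1 : b ≤ 1 := by linarith
    have hx' : x = c (t₀ + b * (t₁ - t₀)) := by
      rw [hc]
      have hq : (t₀ + b * (t₁ - t₀) - t₀) / (t₁ - t₀) = b := by field_simp; ring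
      rw [hq, ← hx]
      have : a = 1 - b := by linarith
      subst this
      module
    have hmem : t₀ + b * (t₁ - t₀) ∈ Set.Icc t₀ t₁ := by
      constructor
      · nlinarith
      · nlinarith
    rw [hfd, hx']
    exact hK _ hmem
  have hct : c t ∈ segment ℝ c₀ c₁ := by
    refine ⟨1 - s, s, by linarith, hs0, by ring, ?_⟩
    rw [hc t, ← hs]
    module
  have hc0 : c₀ ∈ segment ℝ c₀ c₁ := left_mem_segment ℝ c₀ c₁
  have hc1 : c₁ ∈ segment ℝ c₀ c₁ := right_mem_segment ℝ c₀ c₁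
  have est1 : ‖h (c t) - h c₀‖ ≤ K * ‖c t - c₀‖ :=
    (convex_segment c₀ c₁).norm_image_sub_le_of_norm_fderiv_le
      (fun x _ => hdiff x) hseg hc0 hct
  have est2 : ‖h c₁ - h (c t)‖ ≤ K * ‖c₁ - c t‖ :=
    (convex_segment c₀ c₁).norm_image_sub_le_of_norm_fderiv_le
      (fun x _ => hdiff x) hseg hct hc1
  have hn1 : ‖c t - c₀‖ = s * (t₁ - t₀) := by
    rw [hc t, ← hs]
    have : c₀ + s • (c₁ - c₀) - c₀ = s • (c₁ - c₀) := by module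
    rw [this, norm_smul, Real.norm_of_nonneg hs0, harc]
  have hn2 : ‖c₁ - c t‖ = (1 - s) * (t₁ - t₀) := by
    rw [hc t, ← hs]
    have : c₁ - (c₀ + s • (c₁ - c₀)) = (1 - s) • (c₁ - c₀) := by module
    rw [this, norm_smul, Real.norm_of_nonneg (by linarith), harc]
  have key : f t - g t = (1 - s) • (h (c t) - h c₀) - s • (h c₁ - h (c t)) := by
    rw [hf t, hg t, ← hs, hh]
    simp only
    rw [hc t, ← hs]
    module
  rw [key]
  have hN : (0:ℝ) ≤ ‖ε₁ - ε₀‖ := norm_nonneg _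
  calc ‖(1 - s) • (h (c t) - h c₀) - s • (h c₁ - h (c t))‖
      ≤ ‖(1 - s) • (h (c t) - h c₀)‖ + ‖s • (h c₁ - h (c t))‖ := norm_sub_le _ _
    _ = (1 - s) * ‖h (c t) - h c₀‖ + s * ‖h c₁ - h (c t)‖ := by
        rw [norm_smul, norm_smul, Real.norm_of_nonneg (by linarith),
          Real.norm_of_nonneg hs0]
    _ ≤ (1 - s) * (K * (s * (t₁ - t₀))) + s * (K * ((1 - s) * (t₁ - t₀))) := by
        gcongr
        · rw [← hn1]; exact est1
        · rw [← hn2]; exact est2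
    _ ≤ (1 / 2) * (K * (t₁ - t₀) + ‖ε₁ - ε₀‖) := by
        nlinarith [sq_nonneg (2 * s - 1), mul_nonneg hK0 hLpos.le]
end
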